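/- arXiv:1902.05465 — 2 statements merged into one kernel-verified Lean document; each statement's English description precedes it below -/
import Mathlib

section
/- Derivative sequences of composites: for pre-ω-differential maps f : A ⇒ B and g : B ⇒ C between ω-sequences of types, and for all n : ℕ and 0 ≤ j ≤ n, (D^n (g ∘ f))_j = (D^n g)_j ∘ (D^{n+j} f)_0 as functions (DA)_{n+j} → (D(Π^j C))_n. -/
universe u

/-- `DSeqAt A i n` is the `n`-th derivative space `(D (Πⁱ A))_n` of the `i`-fold
shift `Πⁱ A` of the ω-sequence of types `A` (where `(Π A)_k = A (k+1)`), so that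
`(D X)_0 = X 0` and `(D X)_{n+1} = (D X)_n × (D (Π X))_n`. -/
def DSeqAt (A : ℕ → Type u) : ℕ → ℕ → Type u
  | i, 0 => A i
  | i, n + 1 => DSeqAt A i n × DSeqAt A (i + 1) n

/-- A pre-ω-differential map `f : A ⇒ B` is a family of maps `f j : (D A)_j → B j`. -/
def PreOmegaMap (A B : ℕ → Type u) : Type u :=
  ∀ j, DSeqAt A 0 j → B j

/-- The structural map `e^j : (D (Πⁱ A))_{m+1} → (D (Πⁱ A))_m`, defined by
`e^0 = π₁` and `e^{j+1} = e^j × e^j` (meaningful for `j ≤ m`). -/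
def eMap (A : ℕ → Type u) : (i j m : ℕ) → DSeqAt A i (m + 1) → DSeqAt A i m
  | _, 0, _ => Prod.fst
  | _, _ + 1, 0 => Prod.fst
  | i, j + 1, m + 1 => fun p => (eMap A i j m p.1, eMap A (i + 1) j m p.2)

/-- The structural map `c^j : (D (Πⁱ A))_j → (Π^{i+j} A)_0 = A (i + j)` (the
instance `m = 0` of `c^j : (D (Πⁱ A))_{m+j} → (D (Π^{i+j} A))_m`), defined by
`c^0 = id` and `c^{j+1} = c^j ∘ π₂`. -/
def cMap (A : ℕ → Type u) : (i j : ℕ) → DSeqAt A i j → A (i + j)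
  | _, 0 => id
  | i, j + 1 => fun p => cast (congrArg A (Nat.succ_add i j)) (cMap A (i + 1) j p.2)

/-- The iterated derivative sequence: `DMap f n j` is `(Dⁿ f)_j : (D A)_{n+j} → (D (Πʲ B))_n`,
defined by `(D⁰ f)_j = f j` and `(D^{n+1} f)_j = ⟨(Dⁿ f)_j ∘ e^j, (Dⁿ f)_{j+1}⟩`. -/
def DMap {A B : ℕ → Type u} (f : PreOmegaMap A B) :
    (n j : ℕ) → DSeqAt A 0 (n + j) → DSeqAt B j n
  | 0, j => fun p => f j (cast (congrArg (DSeqAt A 0) (Nat.zero_add j)) p)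
  | n + 1, j => fun p =>
      let p' : DSeqAt A 0 (n + j + 1) :=
        cast (congrArg (DSeqAt A 0) (Nat.succ_add n j)) p
      (DMap f n j (eMap A 0 j (n + j) p'), DMap f n (j + 1) p')

/-- Composition of pre-ω-differential maps: `(g ∘ f)_j = g_j ∘ (Dʲ f)_0`. -/
def compPre {A B C : ℕ → Type u} (g : PreOmegaMap B C) (f : PreOmegaMap A B) :
    PreOmegaMap A C :=
  fun j p => g j (DMap f j 0 p)

/-- The identity pre-ω-differential map: `Id_j = c^j`. -/
def idPre (A : ℕ → Type u) : PreOmegaMap A A :=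
  fun j p => cast (congrArg A (Nat.zero_add j)) (cMap A 0 j p)

/-!
Induction on `n`. Unfolding `D^{n+1}` and the induction hypothesis, the second components agree
on the nose, and the first components agree by naturality of `e`:
`e^j ∘ (D^{m+1} f)_k = (D^m f)_k ∘ e^{j+k}`. Naturality is proved by induction on `j`, using
the commutation `e^b ∘ e^a = e^a ∘ e^{b+1}` for `a ≤ b` and the fact that `e^a` at level `m`
does not depend on `a ≥ m`.

Since `n + 1 + j` and `n + j + 1` are not definitionally equal, `DMap` carries casts;
`apply_cast_eq_cast_apply` moves them through index-natural families of maps.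
-/
theorem apply_cast_eq_cast_apply {F G : ℕ → Type u} (φ : ∀ n, F n → G n) {n n' : ℕ}
    (h : n = n') (x : F n) :
    φ n' (cast (congrArg F h) x) = cast (congrArg G h) (φ n x) := by
  subst h; rfl

section eMap

variable {A : ℕ → Type u}

theorem eMap_level_zero (i a : ℕ) : eMap A i a 0 = Prod.fst := by
  cases a <;> rfl

theorem eMap_eq_of_le (i : ℕ) {a b m : ℕ} (ha : m ≤ a) (hb : m ≤ b) :
    eMap A i a m = eMap A i b m := by
  induction m generalizing i a b with
  | zero => rw [eMap_level_zero, eMap_level_zero]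
  | succ m ih =>
    obtain ⟨a, rfl⟩ : ∃ a', a = a' + 1 := ⟨a - 1, by omega⟩
    obtain ⟨b, rfl⟩ : ∃ b', b = b' + 1 := ⟨b - 1, by omega⟩
    funext p
    exact Prod.ext (congrFun (ih i (by omega) (by omega)) p.1)
      (congrFun (ih (i + 1) (by omega) (by omega)) p.2)

theorem eMap_eMap (i : ℕ) {a b : ℕ} (hab : a ≤ b) (m : ℕ) (p : DSeqAt A i (m + 2)) :
    eMap A i b m (eMap A i a (m + 1) p) = eMap A i a m (eMap A i (b + 1) (m + 1) p) := by
  induction m generalizing i a b with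
  | zero =>
    rcases a with _ | a
    · rfl
    · obtain ⟨b, rfl⟩ : ∃ b', b = b' + 1 := ⟨b - 1, by omega⟩
      rw [eMap_level_zero, eMap_level_zero]
      exact congrFun (eMap_eq_of_le i (Nat.zero_le a) (Nat.zero_le (b + 1))) p.1
  | succ m ih =>
    rcases a with _ | a
    · rfl
    · obtain ⟨b, rfl⟩ : ∃ b', b = b' + 1 := ⟨b - 1, by omega⟩
      exact Prod.ext (ih i (by omega) p.1) (ih (i + 1) (by omega) p.2)

end eMap

section DMap

variable {A B : ℕ → Type u} (f : PreOmegaMap A B)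

theorem DMap_succ (n j : ℕ) (p : DSeqAt A 0 (n + 1 + j)) :
    DMap f (n + 1) j p =
      (DMap f n j (eMap A 0 j (n + j) (cast (congrArg (DSeqAt A 0) (Nat.succ_add n j)) p)),
       DMap f n (j + 1) (cast (congrArg (DSeqAt A 0) (Nat.succ_add n j)) p)) :=
  rfl

theorem eMap_DMap (j k m : ℕ) (p : DSeqAt A 0 (m + 1 + k)) :
    eMap B k j m (DMap f (m + 1) k p) =
      DMap f m k
        (eMap A 0 (j + k) (m + k) (cast (congrArg (DSeqAt A 0) (Nat.succ_add m k)) p)) := by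
  induction j generalizing k m with
  | zero => rw [Nat.zero_add]; rfl
  | succ j ih =>
    cases m with
    | zero =>
      rw [eMap_level_zero, DMap_succ,
        eMap_eq_of_le 0 (by omega : 0 + k ≤ k) (by omega : 0 + k ≤ j + 1 + k)]
    | succ m =>
      have hm : m + 1 + k = m + k + 1 := Nat.succ_add m k
      set p' := cast (congrArg (DSeqAt A 0) (Nat.succ_add (m + 1) k)) p
      set x : DSeqAt A 0 (m + k + 2) := cast (congrArg (fun M => DSeqAt A 0 (M + 1)) hm) p'
      have hcast : ∀ a, cast (congrArg (DSeqAt A 0) hm) (eMap A 0 a (m + 1 + k) p') =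
          eMap A 0 a (m + k + 1) x :=
        fun a => (apply_cast_eq_cast_apply (fun M => eMap A 0 a M) hm p').symm
      change (eMap B k j m (DMap f (m + 1) k (eMap A 0 k (m + 1 + k) p')),
          eMap B (k + 1) j m (DMap f (m + 1) (k + 1) p')) = _
      rw [ih, ih, DMap_succ f m k]
      refine Prod.ext (congrArg (DMap f m k) ?_) (congrArg (DMap f m (k + 1)) ?_)
      · rw [hcast, hcast, eMap_eMap 0 (Nat.le_add_left k j), Nat.add_right_comm j 1 k]
      · rw [hcast, Nat.add_right_comm j 1 k]
        rfl

end DMap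

theorem DMap_comp_general {A B C : ℕ → Type u}
    (f : PreOmegaMap A B) (g : PreOmegaMap B C) (n j : ℕ) :
    DMap (compPre g f) n j = DMap g n j ∘ DMap f (n + j) 0 := by
  induction n generalizing j with
  | zero =>
    funext p
    exact congrArg (g j) (apply_cast_eq_cast_apply (fun n => DMap f n 0) (Nat.zero_add j) p)
  | succ n ih =>
    funext p
    set p' := cast (congrArg (DSeqAt A 0) (Nat.succ_add n j)) p
    have hq : cast (congrArg (DSeqAt B 0) (Nat.succ_add n j)) (DMap f (n + 1 + j) 0 p) =
        DMap f (n + j + 1) 0 p' :=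
      (apply_cast_eq_cast_apply (fun M => DMap f M 0) (Nat.succ_add n j) p).symm
    have hnat : eMap B 0 j (n + j) (DMap f (n + j + 1) 0 p') =
        DMap f (n + j) 0 (eMap A 0 j (n + j) p') :=
      eMap_DMap f j 0 (n + j) p'
    rw [Function.comp_apply, DMap_succ (compPre g f), DMap_succ g, hq, hnat, ih, ih]
    rfl

/-- Derivative sequences of composites: for all `n` and `j ≤ n`,
`(Dⁿ (g ∘ f))_j = (Dⁿ g)_j ∘ (D^{n+j} f)_0` as functions
`(D A)_{n+j} → (D (Πʲ C))_n`. -/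
theorem DMap_comp {A B C : ℕ → Type u}
    (f : PreOmegaMap A B) (g : PreOmegaMap B C) (n j : ℕ) (hj : j ≤ n) :
    DMap (compPre g f) n j = DMap g n j ∘ DMap f (n + j) 0 :=
  DMap_comp_general f g n j
end

section
/- For every pre-ω-differential map f : A ⇒ B between ω-sequences of types and all j, k : ℕ, c^j ∘ (D^j f)_k = f_{j+k} as functions (DA)_{j+k} → B_{j+k}. -/
universe u

/-! Since `c^{j+1}` discards the first component and the second component of
`(D^{j+1} f)_k` is `(Dʲ f)_{k+1}`, we get `c^{j+1} ∘ (D^{j+1} f)_k = c^j ∘ (Dʲ f)_{k+1}`,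
and induction on `j` reduces everything to `(D⁰ f)_{j+k} = f_{j+k}`. The indices
`(j+1)+k` and `j+(k+1)` agree only propositionally, so the induction is carried out
for heterogeneous equality. -/

theorem heq_apply_cast {ι : Sort*} {X Y : ι → Sort*} (f : ∀ i, X i → Y i) {i i' : ι}
    (h : i = i') (x : X i) : f i' (cast (congrArg X h) x) ≍ f i x := by
  subst h; rfl

theorem cMap_DMap_heq {A B : ℕ → Type u} (f : PreOmegaMap A B) :
    ∀ (j k : ℕ) (p : DSeqAt A 0 (j + k)), cMap B k j (DMap f j k p) ≍ f (j + k) p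
  | 0, k, p => heq_apply_cast f (Nat.zero_add k) p
  | j + 1, k, p =>
    (cast_heq _ _).trans <|
      (cMap_DMap_heq f j (k + 1) _).trans (heq_apply_cast f (Nat.succ_add j k) p)

/-- For every pre-ω-differential map `f : A ⇒ B` and all `j k`,
`c^j ∘ (Dʲ f)_k = f_{j+k}` as functions `(D A)_{j+k} → B (j+k)`. -/
theorem cMap_DMap {A B : ℕ → Type u} (f : PreOmegaMap A B) (j k : ℕ) :
    (fun p => cast (congrArg B (Nat.add_comm k j)) (cMap B k j (DMap f j k p))) =
      f (j + k) := by
  funext p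
  exact cast_eq_iff_heq.mpr (cMap_DMap_heq f j k p)
end
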